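/- For every density matrix ρ with strictly positive diagonal, 0 ≤ Q(ρ) ≤ S(Δ(ρ)) − S(ρ), where Q(ρ) = S(Δ(ρ)) − S(ρ̄). -/

import Mathlib

open scoped ComplexOrder

open scoped Classical

noncomputable def trim {n : Type*} [Fintype n] (ρ : Matrix n n ℂ) :
    Matrix n n ℂ :=
  Matrix.of fun i j =>
    if ‖ρ i j‖ = Real.sqrt ((ρ i i).re * (ρ j j).re) then ρ i j else 0

noncomputable def vNEntropy {n : Type*} [Fintype n] [DecidableEq n]
    {A : Matrix n n ℂ} (hA : A.IsHermitian) : ℝ :=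
  -∑ i, hA.eigenvalues i * Real.log (hA.eigenvalues i)

/-
Where |ρ_ij| = √(ρ_ii ρ_jj) the Cauchy–Schwarz inequality for the form ρ is tight, so ρ kills
ρ_rr e_j - ρ_rj e_r; hence ρ_rr ρ_kj = ρ_kr ρ_rj, which makes this relation transitive, and
`trim ρ` is the pinching of ρ onto its equivalence classes. Diagonalising every block gives a
block-diagonal unitary V with V⋆ (trim ρ) V diagonal; being block-diagonal, V also leaves the
diagonal of V⋆ ρ V unchanged. Both inequalities are then Schur concavity of the entropy: the
diagonal of W diag(λ) W⋆ is the image of λ under the doubly stochastic matrix (|W_jk|²), and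
-x log x is concave. Applied to V⋆ ρ V it gives S(ρ) ≤ S(trim ρ); applied to trim ρ, whose
diagonal is that of ρ, it gives S(trim ρ) ≤ S(Δ(ρ)).
-/

open Matrix

lemma Real.sqrt_mul_mul_sqrt_mul {a b c : ℝ} (ha : 0 ≤ a) (hb : 0 ≤ b) :
    √(a * b) * √(b * c) = b * √(a * c) := by
  rw [← Real.sqrt_mul (mul_nonneg ha hb), show a * b * (b * c) = b * b * (a * c) by ring,
    Real.sqrt_mul (mul_self_nonneg b), Real.sqrt_mul_self hb]

lemma vNEntropy_eq_sum_negMulLog {n : Type*} [Fintype n] [DecidableEq n] {A : Matrix n n ℂ}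
    (hA : A.IsHermitian) : vNEntropy hA = ∑ i, Real.negMulLog (hA.eigenvalues i) := by
  simp [vNEntropy, Real.negMulLog, Finset.sum_neg_distrib]

lemma ConcaveOn.sum_le_sum_comp_mulVec {n : Type*} [Fintype n] [DecidableEq n] {f : ℝ → ℝ}
    (hf : ConcaveOn ℝ (Set.Ici 0) f) {M : Matrix n n ℝ} (hM : M ∈ doublyStochastic ℝ n)
    {x : n → ℝ} (hx : ∀ i, 0 ≤ x i) : ∑ i, f (x i) ≤ ∑ i, f ((M *ᵥ x) i) :=
  calc ∑ k, f (x k) = ∑ k, (∑ j, M j k) * f (x k) := by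
        simp only [sum_col_of_mem_doublyStochastic hM, one_mul]
    _ = ∑ j, ∑ k, M j k • f (x k) := by
        simp only [Finset.sum_mul, smul_eq_mul]
        exact Finset.sum_comm
    _ ≤ ∑ j, f (∑ k, M j k • x k) := Finset.sum_le_sum fun j _ =>
        hf.le_map_sum (fun k _ => nonneg_of_mem_doublyStochastic hM)
          (sum_row_of_mem_doublyStochastic hM j) (fun k _ => hx k)
    _ = ∑ i, f ((M *ᵥ x) i) := by simp [mulVec, dotProduct]

namespace Matrix

variable {n ι : Type*} [Fintype n] [DecidableEq n] [Fintype ι] [DecidableEq ι]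

lemma normSq_mem_doublyStochastic {W : Matrix n n ℂ} (hW : W ∈ unitaryGroup n ℂ) :
    of (fun i j => Complex.normSq (W i j)) ∈ doublyStochastic ℝ n := by
  refine mem_doublyStochastic_iff_sum.mpr ⟨fun i j => Complex.normSq_nonneg _, fun i => ?_,
    fun j => ?_⟩
  · have h := congr_arg (fun M => (M i i).re) (mem_unitaryGroup_iff.mp hW)
    simpa [mul_apply, Complex.mul_conj, Complex.re_sum] using h
  · have h := congr_arg (fun M => (M j j).re) (mem_unitaryGroup_iff'.mp hW)
    simpa [mul_apply, Complex.mul_conj', Complex.re_sum, Complex.normSq_apply] using h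

lemma re_mul_diagonal_mul_star_apply_self (W : Matrix n n ℂ) (x : n → ℝ) (j : n) :
    ((W * diagonal (fun k => (x k : ℂ)) * star W) j j).re
      = (of (fun i k => Complex.normSq (W i k)) *ᵥ x) j := by
  simp only [mul_apply (M := W * _), mul_diagonal, star_apply, Complex.re_sum, mulVec, dotProduct,
    of_apply]
  refine Finset.sum_congr rfl fun k _ => ?_
  rw [mul_right_comm, RCLike.star_def, Complex.mul_conj, ← Complex.ofReal_mul,
    Complex.ofReal_re]

lemma sum_negMulLog_le_sum_negMulLog_diag {W : Matrix n n ℂ} (hW : W ∈ unitaryGroup n ℂ)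
    {x : n → ℝ} (hx : ∀ i, 0 ≤ x i) :
    ∑ i, Real.negMulLog (x i)
      ≤ ∑ j, Real.negMulLog ((W * diagonal (fun k => (x k : ℂ)) * star W) j j).re := by
  simp only [re_mul_diagonal_mul_star_apply_self]
  exact Real.concaveOn_negMulLog.sum_le_sum_comp_mulVec (normSq_mem_doublyStochastic hW) hx

lemma IsHermitian.exists_unitary_eq_mul_diagonal_mul_star {A : Matrix n n ℂ}
    (hA : A.IsHermitian) : ∃ U ∈ unitaryGroup n ℂ,
      A = U * diagonal (fun k => (hA.eigenvalues k : ℂ)) * star U :=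
  ⟨_, hA.eigenvectorUnitary.2, hA.spectral_theorem⟩

lemma PosSemidef.vNEntropy_le_sum_negMulLog_diag {A : Matrix n n ℂ} (hA : A.PosSemidef)
    {V : Matrix n n ℂ} (hV : V ∈ unitaryGroup n ℂ) :
    vNEntropy hA.isHermitian ≤ ∑ j, Real.negMulLog ((star V * A * V) j j).re := by
  obtain ⟨U, hU, hAU⟩ := hA.isHermitian.exists_unitary_eq_mul_diagonal_mul_star
  have hconj : star V * A * V = (star V * U) * diagonal (fun k => (hA.1.eigenvalues k : ℂ))
      * star (star V * U) := by
    conv_lhs => rw [hAU]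
    simp only [star_mul, star_star, Matrix.mul_assoc]
  rw [vNEntropy_eq_sum_negMulLog, hconj]
  exact sum_negMulLog_le_sum_negMulLog_diag (mul_mem (Unitary.star_mem hV) hU)
    hA.eigenvalues_nonneg

lemma IsHermitian.map_eigenvalues_eq {A : Matrix n n ℂ} (hA : A.IsHermitian)
    {V : Matrix n n ℂ} (hV : V ∈ unitaryGroup n ℂ) {x : n → ℝ}
    (h : A = V * diagonal (fun k => (x k : ℂ)) * star V) :
    Finset.univ.val.map hA.eigenvalues = Finset.univ.val.map x := by
  have hchar : A.charpoly = (diagonal fun k => (x k : ℂ)).charpoly := by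
    rw [h, Matrix.mul_assoc, charpoly_mul_comm, Matrix.mul_assoc, mem_unitaryGroup_iff'.mp hV,
      Matrix.mul_one]
  have hroots := hA.roots_charpoly_eq_eigenvalues
  rw [hchar, charpoly_diagonal, Polynomial.roots_prod _ _ (Finset.prod_ne_zero_iff.mpr
    fun i _ => Polynomial.X_sub_C_ne_zero _)] at hroots
  apply Multiset.map_injective Complex.ofReal_injective
  simpa [Multiset.map_map] using hroots.symm

lemma IsHermitian.vNEntropy_eq_of_eq_mul_diagonal_mul_star {A : Matrix n n ℂ}
    (hA : A.IsHermitian) {V : Matrix n n ℂ} (hV : V ∈ unitaryGroup n ℂ) {x : n → ℝ}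
    (h : A = V * diagonal (fun k => (x k : ℂ)) * star V) :
    vNEntropy hA = ∑ i, Real.negMulLog (x i) := by
  have hsum := congr_arg (fun s => (s.map Real.negMulLog).sum) (hA.map_eigenvalues_eq hV h)
  simp only [Multiset.map_map] at hsum
  rw [vNEntropy_eq_sum_negMulLog, Finset.sum_eq_multiset_sum, Finset.sum_eq_multiset_sum]
  exact hsum

def pinch {α : Type*} [Zero α] (κ : n → ι) (A : Matrix n n α) : Matrix n n α :=
  of fun i j => if κ i = κ j then A i j else 0

omit [Fintype n] [DecidableEq n] [Fintype ι] in
lemma pinch_eq_submatrix_blockDiagonal' {α : Type*} [Zero α] (κ : n → ι) (A : Matrix n n α) :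
    pinch κ A = (blockDiagonal' fun c => A.submatrix (Subtype.val : {i // κ i = c} → n)
      Subtype.val).submatrix (Equiv.sigmaFiberEquiv κ).symm (Equiv.sigmaFiberEquiv κ).symm := by
  ext i j
  have hfib : ∀ k, (Equiv.sigmaFiberEquiv κ).symm k = ⟨κ k, ⟨k, rfl⟩⟩ := fun k => rfl
  rw [submatrix_apply, hfib, hfib]
  by_cases h : κ i = κ j
  · have hj : (⟨κ j, ⟨j, rfl⟩⟩ : Σ c, {k // κ k = c}) = ⟨κ i, ⟨j, h.symm⟩⟩ :=
      Sigma.subtype_ext h.symm rfl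
    rw [hj, blockDiagonal'_apply_eq]
    exact if_pos h
  · rw [blockDiagonal'_apply_ne _ _ _ h]
    exact if_neg h

lemma blockDiagonal'_mem_unitaryGroup {α : Type*} [CommRing α] [StarRing α] {m' : ι → Type*}
    [∀ c, Fintype (m' c)] [∀ c, DecidableEq (m' c)] {U : ∀ c, Matrix (m' c) (m' c) α}
    (hU : ∀ c, U c ∈ unitaryGroup (m' c) α) : blockDiagonal' U ∈ unitaryGroup (Σ c, m' c) α := by
  simp only [mem_unitaryGroup_iff', star_eq_conjTranspose, blockDiagonal'_conjTranspose,
    ← blockDiagonal'_mul]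
  simp only [← star_eq_conjTranspose, mem_unitaryGroup_iff'.mp (hU _)]
  exact blockDiagonal'_one

lemma submatrix_mem_unitaryGroup {α m : Type*} [CommRing α] [StarRing α] [Fintype m]
    [DecidableEq m] {U : Matrix n n α} (hU : U ∈ unitaryGroup n α) (e : m ≃ n) :
    U.submatrix e e ∈ unitaryGroup m α := by
  rw [mem_unitaryGroup_iff', star_eq_conjTranspose, conjTranspose_submatrix, submatrix_mul_equiv,
    ← star_eq_conjTranspose, mem_unitaryGroup_iff'.mp hU, submatrix_one_equiv]

lemma PosSemidef.exists_unitary_pinch_eq {A : Matrix n n ℂ} (hA : A.PosSemidef) (κ : n → ι) :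
    ∃ V ∈ unitaryGroup n ℂ, (∀ i j, κ i ≠ κ j → V i j = 0) ∧ ∃ d : n → ℝ, (∀ i, 0 ≤ d i) ∧
      pinch κ A = V * diagonal (fun i => (d i : ℂ)) * star V := by
  set e := Equiv.sigmaFiberEquiv κ
  have hB c := hA.submatrix (Subtype.val : {i // κ i = c} → n)
  choose U hU hAU using fun c => (hB c).isHermitian.exists_unitary_eq_mul_diagonal_mul_star
  refine ⟨(blockDiagonal' U).submatrix e.symm e.symm,
    submatrix_mem_unitaryGroup (blockDiagonal'_mem_unitaryGroup hU) _,
    fun i j h => blockDiagonal'_apply_ne U ⟨i, rfl⟩ ⟨j, rfl⟩ h,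
    fun i => (hB (κ i)).1.eigenvalues ⟨i, rfl⟩, fun i => (hB (κ i)).eigenvalues_nonneg _, ?_⟩
  have hblocks : (fun c => A.submatrix (Subtype.val : {i // κ i = c} → n) Subtype.val)
      = fun c => U c * diagonal (fun k => ((hB c).1.eigenvalues k : ℂ)) * (U c)ᴴ := funext hAU
  rw [pinch_eq_submatrix_blockDiagonal', hblocks, blockDiagonal'_mul, blockDiagonal'_mul,
    blockDiagonal'_diagonal, ← blockDiagonal'_conjTranspose, ← submatrix_mul_equiv _ _ _ e.symm,
    ← submatrix_mul_equiv _ _ _ e.symm, submatrix_diagonal_equiv, star_eq_conjTranspose,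
    conjTranspose_submatrix]
  rfl

omit [DecidableEq n] [Fintype ι] in
lemma star_mul_pinch_mul_apply_self {α : Type*} [CommRing α] [StarRing α] {κ : n → ι}
    {V : Matrix n n α} (hV : ∀ i j, κ i ≠ κ j → V i j = 0) (A : Matrix n n α) (j : n) :
    (star V * pinch κ A * V) j j = (star V * A * V) j j := by
  simp only [mul_apply, Finset.sum_mul]
  refine Finset.sum_congr rfl fun k _ => Finset.sum_congr rfl fun i _ => ?_
  by_cases hik : κ i = κ k
  · simp [pinch, hik]
  · rcases ne_or_eq (κ i) (κ j) with h | h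
    · simp [star_apply, hV i j h]
    · simp [hV k j fun h' => hik (h.trans h'.symm)]

lemma PosSemidef.vNEntropy_le_vNEntropy_diagonal {A : Matrix n n ℂ} (hA : A.PosSemidef)
    (hΔ : (diagonal fun i => A i i).IsHermitian) : vNEntropy hA.isHermitian ≤ vNEntropy hΔ := by
  have hΔ_eq : diagonal (fun i => A i i) = 1 * diagonal (fun i => ((A i i).re : ℂ)) * star 1 := by
    rw [star_one, Matrix.one_mul, Matrix.mul_one]
    exact congr_arg diagonal (funext fun i => (hA.isHermitian.coe_re_apply_self i).symm)
  calc vNEntropy hA.isHermitian ≤ ∑ j, Real.negMulLog (A j j).re := by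
        simpa using hA.vNEntropy_le_sum_negMulLog_diag (one_mem (unitaryGroup n ℂ))
    _ = vNEntropy hΔ := (hΔ.vNEntropy_eq_of_eq_mul_diagonal_mul_star (one_mem _) hΔ_eq).symm

lemma PosSemidef.vNEntropy_le_vNEntropy_pinch {A : Matrix n n ℂ} (hA : A.PosSemidef)
    (κ : n → ι) (hP : (pinch κ A).IsHermitian) : vNEntropy hA.isHermitian ≤ vNEntropy hP := by
  obtain ⟨V, hV, hsupp, d, -, hPV⟩ := hA.exists_unitary_pinch_eq κ
  have hconj : ∀ j, ((star V * A * V) j j).re = d j := fun j => by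
    rw [← star_mul_pinch_mul_apply_self hsupp, hPV, Matrix.mul_assoc, Matrix.mul_assoc,
      Unitary.star_mul_self_of_mem hV, Matrix.mul_one, ← Matrix.mul_assoc,
      Unitary.star_mul_self_of_mem hV, Matrix.one_mul, diagonal_apply_eq, Complex.ofReal_re]
  calc vNEntropy hA.isHermitian ≤ ∑ j, Real.negMulLog ((star V * A * V) j j).re :=
        hA.vNEntropy_le_sum_negMulLog_diag hV
    _ = vNEntropy hP := by
        rw [hP.vNEntropy_eq_of_eq_mul_diagonal_mul_star hV hPV]
        simp only [hconj]

lemma PosSemidef.vNEntropy_pinch_le_vNEntropy_diagonal {A : Matrix n n ℂ} (hA : A.PosSemidef)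
    (κ : n → ι) (hP : (pinch κ A).IsHermitian) (hΔ : (diagonal fun i => A i i).IsHermitian) :
    vNEntropy hP ≤ vNEntropy hΔ := by
  obtain ⟨V, hV, -, d, hd, hPV⟩ := hA.exists_unitary_pinch_eq κ
  have hP_psd : (pinch κ A).PosSemidef := by
    rw [hPV, star_eq_conjTranspose]
    exact (posSemidef_diagonal_iff.mpr fun i => Complex.zero_le_real.mpr (hd i)
      ).mul_mul_conjTranspose_same V
  have hdiag : (fun i => pinch κ A i i) = fun i => A i i := funext fun i => if_pos rfl
  have hschur := hP_psd.vNEntropy_le_vNEntropy_diagonal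
  rw [hdiag] at hschur
  exact hschur hΔ

end Matrix

namespace Matrix.PosSemidef

variable {n : Type*} [Fintype n] [DecidableEq n] {ρ : Matrix n n ℂ}

lemma mul_apply_eq_of_norm_eq_sqrt (hρ : ρ.PosSemidef) {j r : n}
    (h : ‖ρ j r‖ = √((ρ j j).re * (ρ r r).re)) (k : n) : ρ r r * ρ k j = ρ k r * ρ r j := by
  have hjr : ρ j r * ρ r j = ρ j j * ρ r r := by
    rw [← hρ.isHermitian.apply r j, RCLike.star_def, Complex.mul_conj', h, ← Complex.ofReal_pow,
      Real.sq_sqrt (mul_nonneg (Complex.nonneg_iff.mp (hρ.diag_nonneg (i := j))).1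
        (Complex.nonneg_iff.mp (hρ.diag_nonneg (i := r))).1), Complex.ofReal_mul]
    exact congr_arg₂ _ (hρ.isHermitian.coe_re_apply_self j) (hρ.isHermitian.coe_re_apply_self r)
  set x : n → ℂ := Pi.single j (ρ r r) - Pi.single r (ρ r j)
  have hρx : ∀ k, (ρ *ᵥ x) k = ρ r r * ρ k j - ρ r j * ρ k r := fun k => by
    simp [x, mulVec_sub, mulVec_single]
  have hquad : star x ⬝ᵥ ρ *ᵥ x = 0 := by
    have hdot : star x ⬝ᵥ ρ *ᵥ x = star (ρ r r) * (ρ *ᵥ x) j - star (ρ r j) * (ρ *ᵥ x) r := by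
      simp [x, sub_dotProduct, single_dotProduct]
    rw [hdot, hρx, hρx, hρ.isHermitian.apply r r, hρ.isHermitian.apply j r]
    linear_combination (-ρ r r) * hjr
  have hk := congr_fun ((hρ.dotProduct_mulVec_zero_iff x).mp hquad) k
  rw [hρx, Pi.zero_apply] at hk
  linear_combination hk

lemma equivalence_norm_eq_sqrt (hρ : ρ.PosSemidef) (hdiag : ∀ i, 0 < (ρ i i).re) :
    Equivalence fun i j => ‖ρ i j‖ = √((ρ i i).re * (ρ j j).re) := by
  have hself : ∀ i, ‖ρ i i‖ = (ρ i i).re := fun i => (Complex.re_eq_norm.mpr hρ.diag_nonneg).symm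
  have hsymm : ∀ {i j}, ‖ρ i j‖ = √((ρ i i).re * (ρ j j).re) →
      ‖ρ j i‖ = √((ρ j j).re * (ρ i i).re) := fun {i j} h => by
    rw [← hρ.isHermitian.apply j i, norm_star, h, mul_comm]
  refine ⟨fun i => by rw [Real.sqrt_mul_self (hdiag i).le, hself], hsymm, fun {i j k} hij hjk => ?_⟩
  have hnorm := congr_arg norm (hρ.mul_apply_eq_of_norm_eq_sqrt (hsymm hjk) i)
  rw [norm_mul, norm_mul, hij, hjk, hself] at hnorm
  exact mul_left_cancel₀ (hdiag j).ne'
    (hnorm.trans (Real.sqrt_mul_mul_sqrt_mul (hdiag i).le (hdiag j).le))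

def cauchySchwarzSetoid (hρ : ρ.PosSemidef) (hdiag : ∀ i, 0 < (ρ i i).re) : Setoid n :=
  ⟨_, hρ.equivalence_norm_eq_sqrt hdiag⟩

lemma trim_eq_pinch (hρ : ρ.PosSemidef) (hdiag : ∀ i, 0 < (ρ i i).re) :
    trim ρ = pinch (Quotient.mk (hρ.cauchySchwarzSetoid hdiag)) ρ := by
  ext i j
  exact if_congr (Quotient.eq (r := hρ.cauchySchwarzSetoid hdiag)).symm rfl rfl

end Matrix.PosSemidef

theorem stmt_12_general {d : ℕ} (ρ : Matrix (Fin d) (Fin d) ℂ) (hρ : ρ.PosSemidef)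
    (hdiag : ∀ i, 0 < (ρ i i).re)
    (hΔ : (Matrix.diagonal fun i => ρ i i).IsHermitian)
    (ht : (trim ρ).IsHermitian) :
    0 ≤ vNEntropy hΔ - vNEntropy ht ∧
      vNEntropy hΔ - vNEntropy ht ≤ vNEntropy hΔ - vNEntropy hρ.isHermitian := by
  revert ht
  rw [hρ.trim_eq_pinch hdiag]
  intro ht
  have h_pinch_le_diag := hρ.vNEntropy_pinch_le_vNEntropy_diagonal _ ht hΔ
  have h_le_pinch := hρ.vNEntropy_le_vNEntropy_pinch _ ht
  constructor <;> linarith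

theorem stmt_12 {d : ℕ} (ρ : Matrix (Fin d) (Fin d) ℂ) (hρ : ρ.PosSemidef)
    (htr : ρ.trace = 1) (hdiag : ∀ i, 0 < (ρ i i).re)
    (hΔ : (Matrix.diagonal fun i => ρ i i).IsHermitian)
    (ht : (trim ρ).IsHermitian) :
    0 ≤ vNEntropy hΔ - vNEntropy ht ∧
      vNEntropy hΔ - vNEntropy ht ≤ vNEntropy hΔ - vNEntropy hρ.isHermitian :=
  stmt_12_general ρ hρ hdiag hΔ ht
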